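/- arXiv:1909.09627 — 3 statements merged into one kernel-verified Lean document; each statement's English description precedes it below -/
import Mathlib

section
/- Let n ≥ 2, α ∈ (0,1), C ≥ 0. Let u : closure(Q⁺_{3/4}) → ℝ be continuous, vanish on Q⁰_{3/4}, and be differentiable in space and time on Q⁺_{3/4}, with the normal derivative uₙ extending continuously to the closure. Suppose there exist functions H_{n1},…,H_{n,n−1} and H̃ on Q⁰_{3/4}, each α-Hölder with constant C for the parabolic distance, such that for every (x₀,t₀) ∈ Q⁰_{3/4} and every (x,t) ∈ Q⁺_{3/4} with t ≤ t₀: |u_i(x,t) − H_{ni}(x₀,t₀) xₙ| ≤ C(|x−x₀|+|t−t₀|^{1/2})^{1+α} for each i = 1,…,n−1, and |u_t(x,t) − H̃(x₀,t₀) xₙ| ≤ C(|x−x₀|+|t−t₀|^{1/2})^{1+α}; and suppose |uₙ(x,t) − uₙ(x₀,t₀)| ≤ C(|x−x₀|+|t−t₀|^{1/2})^{α} for all (x,t) in the closure and (x₀,t₀) ∈ Q⁰_{3/4}. Then there is C′ depending only on C, α, n such that for every i = 1,…,n−1, every h with |h| ≤ 1/4 and every t ∈ (−1/16, 0]: |uₙ(h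 e_i, t) − uₙ(0,0) − h H_{ni}(0,0)| ≤ C′(|h|^{1+α} + |t|^{(1+α)/2}). In particular uₙ restricted to the flat boundary is in H^{1+α} and its tangential derivative in direction e_i equals H_{ni}. -/
open scoped BigOperators
noncomputable section

/-- Euclidean space ℝ^m. -/
abbrev En (m : ℕ) := EuclideanSpace ℝ (Fin m)

/-- m × m real matrices. -/
abbrev Mat (m : ℕ) := Matrix (Fin m) (Fin m) ℝ

variable {m n : ℕ}

/-- The parabolic distance `d((x,t),(y,s)) = |x−y| + |t−s|^(1/2)`. -/
def pdist (z w : En m × ℝ) : ℝ := dist z.1 w.1 + Real.sqrt (dist z.2 w.2)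

/-- The Pucci maximal operator `M⁺_{λ,Λ}`. -/
def pucciPlus (lam Lam : ℝ) (M : Mat m) : ℝ :=
  if h : M.IsHermitian then ∑ i, max (lam * h.eigenvalues i) (Lam * h.eigenvalues i) else 0

/-- The Pucci minimal operator `M⁻_{λ,Λ}`. -/
def pucciMinus (lam Lam : ℝ) (M : Mat m) : ℝ :=
  if h : M.IsHermitian then ∑ i, min (lam * h.eigenvalues i) (Lam * h.eigenvalues i) else 0

/-- Euclidean inner product written in coordinates. -/
def dotp (p x : En m) : ℝ := ∑ i, p i * x i

/-- The quadratic form `⟨M x, x⟩`. -/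
def qform (M : Mat m) (x : En m) : ℝ := ∑ i, ∑ j, M i j * x i * x j

/-- A fixed norm on matrices. -/
def matNorm (M : Mat m) : ℝ := ∑ i, ∑ j, |M i j|

/-- The matrix `M` acting on a Euclidean vector. -/
def mulVecE (M : Mat m) (x : En m) : En m :=
  (WithLp.equiv 2 (∀ _ : Fin m, ℝ)).symm (fun i => ∑ j, M i j * x j)

/-- Quadratic parabolic test function centered at `z₀` with jet `(p, M, τ)`. -/
def testPoly (z₀ : En m × ℝ) (p : En m) (M : Mat m) (τ : ℝ) (z : En m × ℝ) : ℝ :=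
  dotp p (z.1 - z₀.1) + (1/2) * qform M (z.1 - z₀.1) + τ * (z.2 - z₀.2)

/-- `u − φ` attains a local maximum at `z₀` within `Ω`, among earlier times. -/
def TouchAbove (Ω : Set (En m × ℝ)) (u φ : En m × ℝ → ℝ) (z₀ : En m × ℝ) : Prop :=
  ∃ r > 0, ∀ z ∈ Ω, z.2 ≤ z₀.2 → dist z z₀ < r → u z - φ z ≤ u z₀ - φ z₀

/-- `u − φ` attains a local minimum at `z₀` within `Ω`, among earlier times. -/
def TouchBelow (Ω : Set (En m × ℝ)) (u φ : En m × ℝ → ℝ) (z₀ : En m × ℝ) : Prop :=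
  ∃ r > 0, ∀ z ∈ Ω, z.2 ≤ z₀.2 → dist z z₀ < r → u z₀ - φ z₀ ≤ u z - φ z

/-- Viscosity subsolution of `−u_t + G(D²u, Du, x, t) = f` on `Ω` (tested with quadratic jets). -/
def IsViscSubsol (G : Mat m → En m → En m × ℝ → ℝ) (f : En m × ℝ → ℝ)
    (Ω : Set (En m × ℝ)) (u : En m × ℝ → ℝ) : Prop :=
  ∀ z₀ ∈ Ω, ∀ (p : En m) (M : Mat m) (τ : ℝ), M.IsHermitian →
    TouchAbove Ω u (testPoly z₀ p M τ) z₀ → f z₀ ≤ -τ + G M p z₀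

/-- Viscosity supersolution of `−u_t + G(D²u, Du, x, t) = f` on `Ω`. -/
def IsViscSupersol (G : Mat m → En m → En m × ℝ → ℝ) (f : En m × ℝ → ℝ)
    (Ω : Set (En m × ℝ)) (u : En m × ℝ → ℝ) : Prop :=
  ∀ z₀ ∈ Ω, ∀ (p : En m) (M : Mat m) (τ : ℝ), M.IsHermitian →
    TouchBelow Ω u (testPoly z₀ p M τ) z₀ → -τ + G M p z₀ ≤ f z₀

/-- Viscosity solution of `−u_t + G(D²u, Du, x, t) = f` on `Ω`. -/
def IsViscSol (G : Mat m → En m → En m × ℝ → ℝ) (f : En m × ℝ → ℝ)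
    (Ω : Set (En m × ℝ)) (u : En m × ℝ → ℝ) : Prop :=
  IsViscSubsol G f Ω u ∧ IsViscSupersol G f Ω u

/-- The Pucci class `S(λ,Λ,K;L)` on `Ω`. -/
def InPucciClass (lam Lam K L : ℝ) (Ω : Set (En m × ℝ)) (v : En m × ℝ → ℝ) : Prop :=
  IsViscSubsol (fun M p _ => pucciPlus lam Lam M + K * ‖p‖) (fun _ => -L) Ω v ∧
  IsViscSupersol (fun M p _ => pucciMinus lam Lam M - K * ‖p‖) (fun _ => L) Ω v

/-- Structure condition (H1). -/
def SatH1 (lam Lam K : ℝ) (F : Mat m → En m → En m × ℝ → ℝ) : Prop :=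
  ∀ (M N : Mat m), M.IsHermitian → N.IsHermitian → ∀ (p q : En m) (z : En m × ℝ),
    pucciMinus lam Lam (M - N) - K * ‖p - q‖ ≤ F M p z - F N q z ∧
    F M p z - F N q z ≤ pucciPlus lam Lam (M - N) + K * ‖p - q‖

/-- Structure condition (H1) for translation invariant operators. -/
def SatH1TI (lam Lam K : ℝ) (F : Mat m → En m → ℝ) : Prop :=
  ∀ (M N : Mat m), M.IsHermitian → N.IsHermitian → ∀ (p q : En m),
    pucciMinus lam Lam (M - N) - K * ‖p - q‖ ≤ F M p - F N q ∧
    F M p - F N q ≤ pucciPlus lam Lam (M - N) + K * ‖p - q‖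

/-- Condition (H2). -/
def SatH2 (abar Cbar : ℝ) (F : Mat m → En m → En m × ℝ → ℝ) : Prop :=
  ∀ (M : Mat m) (p : En m) (z w : En m × ℝ),
    |F M p z - F M p w| ≤ Cbar * (matNorm M + ‖p‖) * pdist z w ^ abar

/-- Upper half ball `B_r⁺` (the last coordinate plays the role of `xₙ`). -/
def Bplus (n : ℕ) (r : ℝ) : Set (En (n+1)) := {x | ‖x‖ < r ∧ 0 < x (Fin.last n)}

/-- Flat boundary ball `B_r⁰`. -/
def Bzero (n : ℕ) (r : ℝ) : Set (En (n+1)) := {x | ‖x‖ < r ∧ x (Fin.last n) = 0}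

/-- Half cylinder `Q_r⁺ = B_r⁺ × (−r², 0]`. -/
def Qplus (n : ℕ) (r : ℝ) : Set (En (n+1) × ℝ) :=
  {z | z.1 ∈ Bplus n r ∧ z.2 ∈ Set.Ioc (-(r^2)) 0}

/-- Flat boundary cylinder `Q_r⁰ = B_r⁰ × (−r², 0]`. -/
def Qzero (n : ℕ) (r : ℝ) : Set (En (n+1) × ℝ) :=
  {z | z.1 ∈ Bzero n r ∧ z.2 ∈ Set.Ioc (-(r^2)) 0}

/-- Parabolic cylinder `Q_r(x₀,t₀) = B_r(x₀) × (t₀ − r², t₀]`. -/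
def pCyl (z₀ : En m × ℝ) (r : ℝ) : Set (En m × ℝ) :=
  {z | dist z.1 z₀.1 < r ∧ z.2 ∈ Set.Ioc (z₀.2 - r^2) z₀.2}

/-- Strictly-earlier parabolic cylinder, used to define the parabolic boundary. -/
def pCylOpen (z₀ : En m × ℝ) (r : ℝ) : Set (En m × ℝ) :=
  {z | dist z.1 z₀.1 < r ∧ z.2 ∈ Set.Ioo (z₀.2 - r^2) z₀.2}

/-- The parabolic boundary `𝒫Ω` (Lieberman): boundary points every earlier cylinder of which
leaves `Ω`. -/
def parBdry (Ω : Set (En m × ℝ)) : Set (En m × ℝ) :=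
  {z ∈ frontier Ω | ∀ ε > 0, ¬ pCylOpen z ε ⊆ Ω}

/-- The lateral boundary `SΩ` (Lieberman). -/
def latBdry (Ω : Set (En m × ℝ)) : Set (En m × ℝ) :=
  {z ∈ parBdry Ω | ∀ ε > 0, (pCylOpen z ε ∩ Ω).Nonempty}

/-- Parabolically `α`-Hölder with constant `C` on `S`. -/
def HolderOn (C α : ℝ) (S : Set (En m × ℝ)) (v : En m × ℝ → ℝ) : Prop :=
  ∀ z ∈ S, ∀ w ∈ S, |v z - v w| ≤ C * pdist z w ^ α

/-- Parabolically `α`-Hölder vector-valued map with constant `C` on `S`. -/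
def HolderOnVec (C α : ℝ) (S : Set (En m × ℝ)) (G : En m × ℝ → En m) : Prop :=
  ∀ z ∈ S, ∀ w ∈ S, ‖G z - G w‖ ≤ C * pdist z w ^ α

/-- Parabolically `α`-Hölder matrix-valued map with constant `C` on `S`. -/
def HolderOnMat (C α : ℝ) (S : Set (En m × ℝ)) (H : En m × ℝ → Mat m) : Prop :=
  ∀ z ∈ S, ∀ w ∈ S, matNorm (H z - H w) ≤ C * pdist z w ^ α

/-- `u ∈ H^{1+α}(S)` with norm (constant) at most `C`: there is a "gradient" `G` which is
`α`-Hölder and gives uniform first-order parabolic Taylor expansions. -/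
def MemH1With (C α : ℝ) (S : Set (En m × ℝ)) (u : En m × ℝ → ℝ) : Prop :=
  ∃ G : En m × ℝ → En m,
    (∀ z ∈ S, |u z| ≤ C ∧ ‖G z‖ ≤ C) ∧
    HolderOnVec C α S G ∧
    ∀ z ∈ S, ∀ w ∈ S, |u w - u z - dotp (G z) (w.1 - z.1)| ≤ C * pdist w z ^ (1 + α)

/-- `u ∈ H^{2+α}(S)` with norm (constant) at most `C`: there are a gradient `G`, a symmetric
spatial Hessian `H`, a time derivative `T`, with `α`-Hölder `H, T` and uniform second-order
parabolic Taylor expansions. -/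
def MemH2With (C α : ℝ) (S : Set (En m × ℝ)) (u : En m × ℝ → ℝ) : Prop :=
  ∃ (G : En m × ℝ → En m) (H : En m × ℝ → Mat m) (T : En m × ℝ → ℝ),
    (∀ z ∈ S, (H z).IsHermitian ∧ |u z| ≤ C ∧ ‖G z‖ ≤ C ∧ matNorm (H z) ≤ C ∧ |T z| ≤ C) ∧
    HolderOnVec C α S G ∧ HolderOnMat C α S H ∧ HolderOn C α S T ∧
    ∀ z ∈ S, ∀ w ∈ S,
      |u w - u z - dotp (G z) (w.1 - z.1) - (1/2) * qform (H z) (w.1 - z.1)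
        - T z * (w.2 - z.2)| ≤ C * pdist w z ^ (2 + α)

/-- Drop the last coordinate. -/
def projLast (x : En (n+1)) : En n :=
  (WithLp.equiv 2 (∀ _ : Fin n, ℝ)).symm (fun i => x i.castSucc)

/-- A space-time domain is of class `H^{2+ᾱ}`: near every lateral boundary point, after a
rotation, it is the supergraph of an `H^{2+ᾱ}` function of `(x', t)`. -/
def IsH2Domain (abar : ℝ) (Ω : Set (En (n+1) × ℝ)) : Prop :=
  ∀ z₀ ∈ latBdry Ω, ∃ r > 0, ∃ R : En (n+1) ≃ₗᵢ[ℝ] En (n+1), ∃ C > 0,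
    ∃ h : En n × ℝ → ℝ,
      MemH2With C abar
        {w : En n × ℝ | dist w.1 (projLast (R z₀.1)) < r ∧ w.2 ∈ Set.Ioc (z₀.2 - r^2) z₀.2} h ∧
      Ω ∩ pCyl z₀ r = {z ∈ pCyl z₀ r | h (projLast (R z.1), z.2) < (R z.1) (Fin.last n)}

/-- `h ∈ C^{2,α}(S)` (purely spatial) with constant `C`. -/
def MemC2With (C α : ℝ) (S : Set (En m)) (h : En m → ℝ) : Prop :=
  ∃ (G : En m → En m) (Hs : En m → Mat m),
    (∀ x ∈ S, (Hs x).IsHermitian ∧ |h x| ≤ C ∧ ‖G x‖ ≤ C ∧ matNorm (Hs x) ≤ C) ∧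
    (∀ x ∈ S, ∀ y ∈ S, matNorm (Hs x - Hs y) ≤ C * ‖x - y‖ ^ α) ∧
    ∀ x ∈ S, ∀ y ∈ S,
      |h y - h x - dotp (G x) (y - x) - (1/2) * qform (Hs x) (y - x)| ≤ C * ‖y - x‖ ^ (2 + α)

/-- A spatial domain of class `C^{2,ᾱ}`. -/
def IsC2Domain (abar : ℝ) (D : Set (En (n+1))) : Prop :=
  ∀ x₀ ∈ frontier D, ∃ r > 0, ∃ R : En (n+1) ≃ₗᵢ[ℝ] En (n+1), ∃ C > 0, ∃ h : En n → ℝ,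
    MemC2With C abar {y : En n | dist y (projLast (R x₀)) < r} h ∧
    D ∩ Metric.ball x₀ r = {x ∈ Metric.ball x₀ r | h (projLast (R x)) < (R x) (Fin.last n)}

/-- A modulus of continuity. -/
def IsModulus (ρ : ℝ → ℝ) : Prop :=
  (∀ s, 0 ≤ ρ s) ∧ (∀ a b, 0 ≤ a → a ≤ b → ρ a ≤ ρ b) ∧
  Filter.Tendsto ρ (nhdsWithin 0 (Set.Ioi 0)) (nhds 0)

/-!
Fix a tangential displacement `a` along `e_i`, a time `s ≤ 0` and a height `δ > 0`. Since `u`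
vanishes on the flat boundary and `uₙ` is `α`-Hölder up to it, `u(a e_i + δ eₙ, s)` equals
`δ uₙ(a e_i, s)` up to `O(δ^{1+α})`. At height `δ` the expansions `u_i ≈ δ H_{ni}` and
`u_t ≈ δ H̃`, together with the Hölder continuity of `H_{ni}` and `H̃`, give the increments of `u`
along `e_i` and in time up to `δ · O(|a|^{1+α} + |s|^{(1+α)/2}) + O(δ^{1+α})`. Dividing by `δ`
and letting `δ → 0`,
`|uₙ(a e_i, s) − uₙ(0,0) − a H_{ni}(0,s) − s H̃(0,0)| ≤ C (|a|^{1+α} + |s|^{(1+α)/2})`.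
The case `a = 0`, `s = −1/16` bounds `H̃(0,0)` through the Hölder continuity of `uₙ`, and the
Hölder continuity of `H_{ni}` in time replaces `H_{ni}(0,s)` by `H_{ni}(0,0)`.
-/

open Set Filter Topology

theorem abs_sub_sub_mul_le_of_hasDerivAt {f f' : ℝ → ℝ} {a b c K : ℝ}
    (hf : ContinuousOn f (uIcc a b)) (hf' : ∀ x ∈ uIoo a b, HasDerivAt f (f' x) x)
    (hK : ∀ x ∈ uIoo a b, |f' x - c| ≤ K) :
    |f b - f a - c * (b - a)| ≤ K * |b - a| := by
  wlog hab : a < b generalizing a b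
  · rcases (not_lt.1 hab).eq_or_lt with rfl | hba
    · simp
    · rw [uIcc_comm] at hf
      rw [uIoo_comm] at hf' hK
      calc |f b - f a - c * (b - a)| = |f a - f b - c * (a - b)| := by
            rw [← abs_neg]; ring_nf
        _ ≤ K * |a - b| := this hf hf' hK hba
        _ = K * |b - a| := by rw [abs_sub_comm]
  rw [uIcc_of_le hab.le] at hf
  rw [uIoo_of_le hab.le] at hf' hK
  obtain ⟨ξ, hξ, hslope⟩ :=
    exists_hasDerivAt_eq_slope (fun x => f x - c * x) (fun x => f' x - c) hab
      (hf.sub (continuousOn_const.mul continuousOn_id))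
      fun x hx => (hf' x hx).sub (by simpa using (hasDerivAt_id x).const_mul c)
  rw [eq_div_iff (sub_pos.2 hab).ne'] at hslope
  calc |f b - f a - c * (b - a)| = |f' ξ - c| * |b - a| := by
        rw [← abs_mul, hslope]; ring_nf
    _ ≤ K * |b - a| := mul_le_mul_of_nonneg_right (hK ξ hξ) (abs_nonneg _)

theorem HasLineDerivAt.hasDerivAt_add_smul {𝕜 E F : Type*} [NontriviallyNormedField 𝕜]
    [NormedAddCommGroup E] [NormedSpace 𝕜 E] [NormedAddCommGroup F] [NormedSpace 𝕜 F]
    {f : E → F} {f' : F} {x v : E} {t : 𝕜} (h : HasLineDerivAt 𝕜 f f' (x + t • v) v) :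
    HasDerivAt (fun s => f (x + s • v)) f' t := by
  have := HasDerivAt.comp_sub_const t t (by rwa [sub_self])
  convert this using 2 with s
  simp only [add_assoc, ← add_smul, add_sub_cancel]

theorem le_of_forall_le_add_mul_rpow {x B A α r : ℝ} (hα : 0 < α) (hr : 0 < r)
    (h : ∀ δ ∈ Ioc 0 r, x ≤ B + A * δ ^ α) : x ≤ B := by
  have hlim : Tendsto (fun δ : ℝ => B + A * δ ^ α) (𝓝[>] 0) (𝓝 B) := by
    have := ((Real.continuousAt_rpow_const 0 α (Or.inr hα.le)).tendsto.const_mul A).const_add B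
    simpa [Real.zero_rpow hα.ne'] using this.mono_left nhdsWithin_le_nhds
  exact ge_of_tendsto hlim (eventually_of_mem (Ioc_mem_nhdsGT hr) h)

theorem mul_rpow_le_rpow_add_rpow {x y α : ℝ} (hx : 0 ≤ x) (hy : 0 ≤ y) (hα : 0 ≤ α) :
    x * y ^ α ≤ x ^ (1 + α) + y ^ (1 + α) := by
  have hα' : 1 + α ≠ 0 := by positivity
  rcases le_total x y with hxy | hyx
  · calc x * y ^ α ≤ y * y ^ α := by gcongr
      _ = y ^ (1 + α) := (Real.rpow_one_add' hy hα').symm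
      _ ≤ x ^ (1 + α) + y ^ (1 + α) := le_add_of_nonneg_left (by positivity)
  · calc x * y ^ α ≤ x * x ^ α := by gcongr
      _ = x ^ (1 + α) := (Real.rpow_one_add' hx hα').symm
      _ ≤ x ^ (1 + α) + y ^ (1 + α) := le_add_of_nonneg_right (by positivity)

theorem abs_sub_mul_le_add_mul {g H₀ H₁ δ ε η : ℝ} (hδ : 0 ≤ δ) (hg : |g - H₀ * δ| ≤ ε)
    (hH : |H₀ - H₁| ≤ η) : |g - δ * H₁| ≤ ε + η * δ :=
  calc |g - δ * H₁| ≤ |g - H₀ * δ| + |(H₀ - H₁) * δ| :=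
        (abs_add_le _ _).trans_eq' (by ring_nf)
    _ ≤ ε + η * δ := by rw [abs_mul, abs_of_nonneg hδ]; gcongr

theorem abs_add_mul_add_mul_le {A Δ L h t α C K : ℝ} (hα : 0 ≤ α) (hα1 : α ≤ 1)
    (hC : 0 ≤ C) (ht : |t| ≤ 1) (hA : |A| ≤ C * |h| ^ α * |h| + C * √|t| ^ α * |t|)
    (hΔ : |Δ| ≤ C * √|t| ^ α) (hL : |L| ≤ K) :
    |A + h * Δ + t * L| ≤ (2 * C + K) * (|h| ^ (1 + α) + |t| ^ ((1 + α) / 2)) := by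
  set T := √|t| with hT
  have hT0 : 0 ≤ T := Real.sqrt_nonneg _
  have hT1 : T ≤ 1 := Real.sqrt_le_one.mpr ht
  have hα' : 1 + α ≠ 0 := by positivity
  have htT : |t| = T ^ 2 := (Real.sq_sqrt (abs_nonneg t)).symm
  have htpow : |t| ^ ((1 + α) / 2) = T ^ (1 + α) := by
    rw [hT, Real.sqrt_eq_rpow, ← Real.rpow_mul (abs_nonneg t)]
    ring_nf
  have hT2 : T ^ 2 ≤ T ^ (1 + α) := by
    rw [← Real.rpow_natCast]
    exact Real.rpow_le_rpow_of_exponent_ge' hT0 hT1 (by positivity) (by push_cast; linarith)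
  have hTα : T ^ α * |t| ≤ T ^ (1 + α) := by
    rw [Real.rpow_one_add' hT0 hα', htT, mul_comm T]
    gcongr
    nlinarith
  have hh : |h| ^ α * |h| = |h| ^ (1 + α) := by
    rw [Real.rpow_one_add' (abs_nonneg h) hα', mul_comm]
  have hA' : |A| ≤ C * |h| ^ (1 + α) + C * T ^ (1 + α) := by
    rw [← hh]; nlinarith [mul_le_mul_of_nonneg_left hTα hC]
  have hΔ' : |h * Δ| ≤ C * (|h| ^ (1 + α) + T ^ (1 + α)) := by
    rw [abs_mul]
    nlinarith [mul_le_mul_of_nonneg_left hΔ (abs_nonneg h),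
      mul_rpow_le_rpow_add_rpow (abs_nonneg h) hT0 hα]
  have hL' : |t * L| ≤ K * T ^ (1 + α) := by
    rw [abs_mul, mul_comm K]
    exact mul_le_mul (htT ▸ hT2) hL (abs_nonneg L) (by positivity)
  have hK : 0 ≤ K * |h| ^ (1 + α) := mul_nonneg ((abs_nonneg L).trans hL) (by positivity)
  rw [htpow]
  linarith [abs_add_three A (h * Δ) (t * L)]

@[simp]
theorem EuclideanSpace.single_zero {ι : Type*} [DecidableEq ι] (i : ι) :
    EuclideanSpace.single i (0 : ℝ) = 0 :=
  (PiLp.single_eq_zero_iff 2 i).2 rfl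

def planePt (i : Fin n) (a b s : ℝ) : En (n+1) × ℝ :=
  (EuclideanSpace.single i.castSucc a + EuclideanSpace.single (Fin.last n) b, s)

section planePt

variable (i : Fin n) (a b s : ℝ)

@[simp]
theorem planePt_fst_last : (planePt i a b s).1 (Fin.last n) = b := by
  simp [planePt, (Fin.castSucc_lt_last i).ne]

theorem planePt_eq_add_smul_tangent :
    planePt i a b s = planePt i 0 b s + a • (EuclideanSpace.single i.castSucc 1, 0) := by
  ext <;> simp [planePt, add_comm]

theorem planePt_eq_add_smul_normal :
    planePt i a b s = planePt i a 0 s + b • (EuclideanSpace.single (Fin.last n) 1, 0) := by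
  ext <;> simp [planePt]

theorem planePt_eq_add_smul_time :
    planePt i a b s = planePt i a b 0 + s • ((0 : En (n+1)), (1 : ℝ)) := by
  ext <;> simp [planePt]

theorem pdist_planePt_normal : pdist (planePt i a b s) (planePt i a 0 s) = |b| := by
  simp [pdist, planePt]

theorem pdist_planePt_tangent : pdist (planePt i a 0 s) (planePt i 0 0 s) = |a| := by
  simp [pdist, planePt]

theorem pdist_planePt_time (s' : ℝ) :
    pdist (planePt i 0 0 s) (planePt i 0 0 s') = √|s - s'| := by
  simp [pdist, planePt, Real.dist_eq]

variable {i a b s} {r : ℝ}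

theorem planePt_mem_Qplus (hab : |a| + b < r) (hb : 0 < b) (hs : s ∈ Ioc (-(r ^ 2)) 0) :
    planePt i a b s ∈ Qplus n r := by
  refine ⟨⟨?_, by simpa using hb⟩, hs⟩
  calc ‖(planePt i a b s).1‖
      ≤ ‖EuclideanSpace.single i.castSucc a‖ + ‖EuclideanSpace.single (Fin.last n) b‖ :=
        norm_add_le _ _
    _ < r := by simpa [abs_of_pos hb] using hab

theorem planePt_mem_Qzero (ha : |a| < r) (hs : s ∈ Ioc (-(r ^ 2)) 0) :
    planePt i a 0 s ∈ Qzero n r :=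
  ⟨⟨by simpa [planePt] using ha, by simp⟩, hs⟩

end planePt

theorem Qzero_subset_closure_Qplus {r : ℝ} : Qzero n r ⊆ closure (Qplus n r) := by
  rintro ⟨x, s⟩ ⟨⟨hx, hxn⟩, hs⟩
  let γ : ℝ → En (n+1) × ℝ := fun b => (x + b • EuclideanSpace.single (Fin.last n) 1, s)
  have hγ : Tendsto γ (𝓝[>] 0) (𝓝 (x, s)) := by
    have : Continuous γ := by fun_prop
    simpa [γ] using this.continuousAt.tendsto.mono_left (nhdsWithin_le_nhds (a := (0 : ℝ)))
  refine mem_closure_of_tendsto hγ (eventually_of_mem (Ioo_mem_nhdsGT (sub_pos.2 hx)) ?_)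
  rintro b ⟨hb, hbr⟩
  refine ⟨⟨?_, ?_⟩, hs⟩
  · calc ‖x + b • EuclideanSpace.single (Fin.last n) 1‖
        ≤ ‖x‖ + ‖b • EuclideanSpace.single (Fin.last n) (1 : ℝ)‖ := norm_add_le _ _
      _ < r := by simp [norm_smul, abs_of_pos hb]; linarith
  · simpa [γ, show x (Fin.last n) = 0 from hxn] using hb

section planePtDeriv

variable {i : Fin n} {a b s c : ℝ} {u : En (n+1) × ℝ → ℝ}

theorem HasLineDerivAt.hasDerivAt_planePt_tangent
    (h : HasLineDerivAt ℝ u c (planePt i a b s) (EuclideanSpace.single i.castSucc 1, 0)) :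
    HasDerivAt (fun a => u (planePt i a b s)) c a := by
  rw [planePt_eq_add_smul_tangent] at h
  simpa only [← planePt_eq_add_smul_tangent] using h.hasDerivAt_add_smul

theorem HasLineDerivAt.hasDerivAt_planePt_normal
    (h : HasLineDerivAt ℝ u c (planePt i a b s) (EuclideanSpace.single (Fin.last n) 1, 0)) :
    HasDerivAt (fun b => u (planePt i a b s)) c b := by
  rw [planePt_eq_add_smul_normal] at h
  simpa only [← planePt_eq_add_smul_normal] using h.hasDerivAt_add_smul

theorem HasLineDerivAt.hasDerivAt_planePt_time
    (h : HasLineDerivAt ℝ u c (planePt i a b s) ((0 : En (n+1)), (1 : ℝ))) :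
    HasDerivAt (fun s => u (planePt i a b s)) c s := by
  rw [planePt_eq_add_smul_time] at h
  simpa only [← planePt_eq_add_smul_time] using h.hasDerivAt_add_smul

theorem continuous_planePt_normal : Continuous fun b => planePt i a b s := by
  rw [funext fun b => planePt_eq_add_smul_normal i a b s]
  fun_prop

end planePtDeriv

section quarterBox

variable {i : Fin n} {a b s : ℝ}

theorem planePt_mem_Qplus_of_le (ha : |a| ≤ 1/4) (hb : 0 < b) (hb' : b ≤ 1/4)
    (hs : -(1/4) ≤ s) (hs' : s ≤ 0) : planePt i a b s ∈ Qplus n (3/4) :=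
  planePt_mem_Qplus (by linarith) hb ⟨by norm_num; linarith, hs'⟩

theorem planePt_mem_Qzero_of_le (ha : |a| ≤ 1/4) (hs : -(1/4) ≤ s) (hs' : s ≤ 0) :
    planePt i a 0 s ∈ Qzero n (3/4) :=
  planePt_mem_Qzero (by linarith) ⟨by norm_num; linarith, hs'⟩

end quarterBox

section flatBoundaryEstimates

variable {i : Fin n} {α C : ℝ} {u un : En (n+1) × ℝ → ℝ} {a s δ : ℝ}

theorem abs_u_planePt_sub_mul_un_le (hu : ContinuousOn u (closure (Qplus n (3/4))))
    (hu0 : ∀ z ∈ Qzero n (3/4), u z = 0)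
    (hun : ∀ z ∈ Qplus n (3/4),
      HasLineDerivAt ℝ u (un z) z (EuclideanSpace.single (Fin.last n) 1, 0))
    (hunH : ∀ z₀ ∈ Qzero n (3/4), ∀ z ∈ closure (Qplus n (3/4)),
      |un z - un z₀| ≤ C * pdist z z₀ ^ α)
    (hα : 0 ≤ α) (hC : 0 ≤ C) (ha : |a| ≤ 1/4) (hs : -(1/4) ≤ s) (hs' : s ≤ 0)
    (hδ : 0 < δ) (hδ' : δ ≤ 1/4) :
    |u (planePt i a δ s) - δ * un (planePt i a 0 s)| ≤ C * δ ^ α * δ := by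
  have hfoot : planePt i a 0 s ∈ Qzero n (3/4) := planePt_mem_Qzero_of_le ha hs hs'
  have hcont : ContinuousOn (fun b => u (planePt i a b s)) (uIcc 0 δ) := by
    refine hu.comp continuous_planePt_normal.continuousOn fun b hb => ?_
    rw [uIcc_of_le hδ.le] at hb
    rcases hb.1.eq_or_lt with rfl | hb0
    · exact Qzero_subset_closure_Qplus hfoot
    · exact subset_closure (planePt_mem_Qplus_of_le ha hb0 (hb.2.trans hδ') hs hs')
  have hmem : ∀ b ∈ uIoo 0 δ, 0 < b ∧ b ≤ δ ∧ planePt i a b s ∈ Qplus n (3/4) := by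
    rw [uIoo_of_le hδ.le]
    exact fun b hb =>
      ⟨hb.1, hb.2.le, planePt_mem_Qplus_of_le ha hb.1 (hb.2.le.trans hδ') hs hs'⟩
  have := abs_sub_sub_mul_le_of_hasDerivAt (c := un (planePt i a 0 s)) (K := C * δ ^ α) hcont
    (fun b hb => (hun _ (hmem b hb).2.2).hasDerivAt_planePt_normal) fun b hb => by
      obtain ⟨hb0, hbδ, hbQ⟩ := hmem b hb
      calc |un (planePt i a b s) - un (planePt i a 0 s)|
          ≤ C * pdist (planePt i a b s) (planePt i a 0 s) ^ α :=
            hunH _ hfoot _ (subset_closure hbQ)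
        _ ≤ C * δ ^ α := by rw [pdist_planePt_normal, abs_of_pos hb0]; gcongr
  simpa [hu0 _ hfoot, abs_of_pos hδ, mul_comm] using this

theorem abs_u_planePt_sub_sub_tangent_le {ui H : En (n+1) × ℝ → ℝ}
    (hui : ∀ z ∈ Qplus n (3/4),
      HasLineDerivAt ℝ u (ui z) z (EuclideanSpace.single i.castSucc 1, 0))
    (huiH : ∀ z₀ ∈ Qzero n (3/4), ∀ z ∈ Qplus n (3/4), z.2 ≤ z₀.2 →
      |ui z - H z₀ * z.1 (Fin.last n)| ≤ C * pdist z z₀ ^ (1 + α))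
    (hH : HolderOn C α (Qzero n (3/4)) H) (hα : 0 ≤ α) (hC : 0 ≤ C) (ha : |a| ≤ 1/4)
    (hs : -(1/4) ≤ s) (hs' : s ≤ 0) (hδ : 0 < δ) (hδ' : δ ≤ 1/4) :
    |u (planePt i a δ s) - u (planePt i 0 δ s) - δ * H (planePt i 0 0 s) * a|
      ≤ (C * δ ^ α * δ + C * |a| ^ α * δ) * |a| := by
  have hle : ∀ x ∈ uIcc 0 a, |x| ≤ |a| := fun x hx => by
    simpa using abs_sub_left_of_mem_uIcc hx
  have hQ : ∀ x ∈ uIcc 0 a, planePt i x δ s ∈ Qplus n (3/4) := fun x hx =>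
    planePt_mem_Qplus_of_le ((hle x hx).trans ha) hδ hδ' hs hs'
  have hd : ∀ x ∈ uIcc 0 a,
      HasDerivAt (fun a => u (planePt i a δ s)) (ui (planePt i x δ s)) x := fun x hx =>
    (hui _ (hQ x hx)).hasDerivAt_planePt_tangent
  have := abs_sub_sub_mul_le_of_hasDerivAt (c := δ * H (planePt i 0 0 s))
    (K := C * δ ^ α * δ + C * |a| ^ α * δ)
    (fun x hx => (hd x hx).continuousAt.continuousWithinAt)
    (fun x hx => hd x (uIoo_subset_uIcc_self hx)) fun x hx => by
      replace hx := uIoo_subset_uIcc_self hx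
      have hfoot := planePt_mem_Qzero_of_le (i := i) ((hle x hx).trans ha) hs hs'
      have h₁ := huiH _ hfoot _ (hQ x hx) le_rfl
      have h₂ := hH _ hfoot _ (planePt_mem_Qzero_of_le (i := i) (a := 0) (by norm_num) hs hs')
      rw [pdist_planePt_normal, planePt_fst_last, abs_of_pos hδ,
        Real.rpow_add hδ, Real.rpow_one] at h₁
      rw [pdist_planePt_tangent] at h₂
      have hmono : C * |x| ^ α ≤ C * |a| ^ α :=
        mul_le_mul_of_nonneg_left (Real.rpow_le_rpow (abs_nonneg x) (hle x hx) hα) hC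
      exact (abs_sub_mul_le_add_mul hδ.le h₁ (h₂.trans hmono)).trans_eq (by ring)
  simpa using this

theorem abs_u_planePt_sub_sub_time_le {ut H : En (n+1) × ℝ → ℝ}
    (hut : ∀ z ∈ Qplus n (3/4), HasLineDerivAt ℝ u (ut z) z ((0 : En (n+1)), (1 : ℝ)))
    (hutH : ∀ z₀ ∈ Qzero n (3/4), ∀ z ∈ Qplus n (3/4), z.2 ≤ z₀.2 →
      |ut z - H z₀ * z.1 (Fin.last n)| ≤ C * pdist z z₀ ^ (1 + α))
    (hH : HolderOn C α (Qzero n (3/4)) H) (hα : 0 ≤ α) (hC : 0 ≤ C)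
    (hs : -(1/4) ≤ s) (hs' : s ≤ 0) (hδ : 0 < δ) (hδ' : δ ≤ 1/4) :
    |u (planePt i 0 δ s) - u (planePt i 0 δ 0) - δ * H (planePt i 0 0 0) * s|
      ≤ (C * δ ^ α * δ + C * √|s| ^ α * δ) * |s| := by
  have hle : ∀ x ∈ uIcc 0 s, s ≤ x ∧ x ≤ 0 := fun x hx => by
    rwa [uIcc_of_ge hs'] at hx
  have hQ : ∀ x ∈ uIcc 0 s, planePt i 0 δ x ∈ Qplus n (3/4) := fun x hx =>
    planePt_mem_Qplus_of_le (by norm_num) hδ hδ' (hs.trans (hle x hx).1) (hle x hx).2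
  have hd : ∀ x ∈ uIcc 0 s,
      HasDerivAt (fun s => u (planePt i 0 δ s)) (ut (planePt i 0 δ x)) x := fun x hx =>
    (hut _ (hQ x hx)).hasDerivAt_planePt_time
  have := abs_sub_sub_mul_le_of_hasDerivAt (c := δ * H (planePt i 0 0 0))
    (K := C * δ ^ α * δ + C * √|s| ^ α * δ)
    (fun x hx => (hd x hx).continuousAt.continuousWithinAt)
    (fun x hx => hd x (uIoo_subset_uIcc_self hx)) fun x hx => by
      replace hx := uIoo_subset_uIcc_self hx
      have hfoot := planePt_mem_Qzero_of_le (i := i) (a := 0) (by norm_num)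
        (hs.trans (hle x hx).1) (hle x hx).2
      have h₁ := hutH _ hfoot _ (hQ x hx) le_rfl
      have h₂ := hH _ hfoot _
        (planePt_mem_Qzero_of_le (i := i) (a := 0) (by norm_num) (by norm_num) le_rfl)
      rw [pdist_planePt_normal, planePt_fst_last, abs_of_pos hδ,
        Real.rpow_add hδ, Real.rpow_one] at h₁
      rw [pdist_planePt_time, sub_zero] at h₂
      have hmono : C * √|x| ^ α ≤ C * √|s| ^ α := by
        refine mul_le_mul_of_nonneg_left (Real.rpow_le_rpow (Real.sqrt_nonneg _)
          (Real.sqrt_le_sqrt ?_) hα) hC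
        simpa using abs_sub_left_of_mem_uIcc hx
      exact (abs_sub_mul_le_add_mul hδ.le h₁ (h₂.trans hmono)).trans_eq (by ring)
  simpa using this

theorem abs_un_planePt_sub_le {ui ut Hn Ht : En (n+1) × ℝ → ℝ}
    (hu : ContinuousOn u (closure (Qplus n (3/4)))) (hu0 : ∀ z ∈ Qzero n (3/4), u z = 0)
    (hun : ∀ z ∈ Qplus n (3/4),
      HasLineDerivAt ℝ u (un z) z (EuclideanSpace.single (Fin.last n) 1, 0))
    (hui : ∀ z ∈ Qplus n (3/4),
      HasLineDerivAt ℝ u (ui z) z (EuclideanSpace.single i.castSucc 1, 0))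
    (hut : ∀ z ∈ Qplus n (3/4), HasLineDerivAt ℝ u (ut z) z ((0 : En (n+1)), (1 : ℝ)))
    (hHn : HolderOn C α (Qzero n (3/4)) Hn) (hHt : HolderOn C α (Qzero n (3/4)) Ht)
    (huiH : ∀ z₀ ∈ Qzero n (3/4), ∀ z ∈ Qplus n (3/4), z.2 ≤ z₀.2 →
      |ui z - Hn z₀ * z.1 (Fin.last n)| ≤ C * pdist z z₀ ^ (1 + α))
    (hutH : ∀ z₀ ∈ Qzero n (3/4), ∀ z ∈ Qplus n (3/4), z.2 ≤ z₀.2 →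
      |ut z - Ht z₀ * z.1 (Fin.last n)| ≤ C * pdist z z₀ ^ (1 + α))
    (hunH : ∀ z₀ ∈ Qzero n (3/4), ∀ z ∈ closure (Qplus n (3/4)),
      |un z - un z₀| ≤ C * pdist z z₀ ^ α)
    (hα : 0 < α) (hC : 0 ≤ C) (ha : |a| ≤ 1/4) (hs : -(1/4) ≤ s) (hs' : s ≤ 0) :
    |un (planePt i a 0 s) - un (planePt i 0 0 0) - a * Hn (planePt i 0 0 s)
      - s * Ht (planePt i 0 0 0)| ≤ C * |a| ^ α * |a| + C * √|s| ^ α * |s| := by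
  refine le_of_forall_le_add_mul_rpow (A := 2 * C + C * |a| + C * |s|) hα
    (by norm_num : (0 : ℝ) < 1/4) fun δ ⟨hδ, hδ'⟩ => le_of_mul_le_mul_left ?_ hδ
  have hV := abs_u_planePt_sub_mul_un_le (i := i) hu hu0 hun hunH hα.le hC ha hs hs' hδ hδ'
  have hV₀ := abs_u_planePt_sub_mul_un_le (i := i) (a := 0) hu hu0 hun hunH hα.le hC
    (by norm_num) (by norm_num) le_rfl hδ hδ'
  have hX := abs_u_planePt_sub_sub_tangent_le hui huiH hHn hα.le hC ha hs hs' hδ hδ'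
  have hT := abs_u_planePt_sub_sub_time_le (i := i) hut hutH hHt hα.le hC hs hs' hδ hδ'
  have hsplit : δ * (un (planePt i a 0 s) - un (planePt i 0 0 0) - a * Hn (planePt i 0 0 s)
      - s * Ht (planePt i 0 0 0))
      = -(u (planePt i a δ s) - δ * un (planePt i a 0 s))
        + (u (planePt i 0 δ 0) - δ * un (planePt i 0 0 0))
        + (u (planePt i a δ s) - u (planePt i 0 δ s) - δ * Hn (planePt i 0 0 s) * a)
        + (u (planePt i 0 δ s) - u (planePt i 0 δ 0) - δ * Ht (planePt i 0 0 0) * s) := by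
    ring
  calc δ * |un (planePt i a 0 s) - un (planePt i 0 0 0) - a * Hn (planePt i 0 0 s)
        - s * Ht (planePt i 0 0 0)|
      = |δ * (un (planePt i a 0 s) - un (planePt i 0 0 0) - a * Hn (planePt i 0 0 s)
        - s * Ht (planePt i 0 0 0))| := by rw [abs_mul, abs_of_pos hδ]
    _ ≤ C * δ ^ α * δ + C * δ ^ α * δ + (C * δ ^ α * δ + C * |a| ^ α * δ) * |a|
        + (C * δ ^ α * δ + C * √|s| ^ α * δ) * |s| := by
      rw [hsplit]
      refine (abs_add_le _ _).trans (add_le_add ((abs_add_le _ _).trans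
        (add_le_add ((abs_add_le _ _).trans (add_le_add ?_ hV₀)) hX)) hT)
      rwa [abs_neg]
    _ = δ * (C * |a| ^ α * |a| + C * √|s| ^ α * |s|
          + (2 * C + C * |a| + C * |s|) * δ ^ α) := by
      ring

end flatBoundaryEstimates

theorem stmt10_general (n : ℕ) (α C : ℝ) (hα : 0 < α) (hα1 : α < 1) (hC : 0 ≤ C) :
    ∃ C' : ℝ, 0 < C' ∧
    ∀ (u un ut : En (n+1) × ℝ → ℝ) (ui : Fin n → En (n+1) × ℝ → ℝ)
      (Hni : Fin n → En (n+1) × ℝ → ℝ) (Htil : En (n+1) × ℝ → ℝ),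
      ContinuousOn u (closure (Qplus n (3/4))) →
      (∀ z ∈ Qzero n (3/4), u z = 0) →
      (∀ z ∈ Qplus n (3/4),
        (∀ i : Fin n, HasLineDerivAt ℝ u (ui i z) z (EuclideanSpace.single i.castSucc 1, 0)) ∧
        HasLineDerivAt ℝ u (un z) z (EuclideanSpace.single (Fin.last n) 1, 0) ∧
        HasLineDerivAt ℝ u (ut z) z ((0 : En (n+1)), (1 : ℝ))) →
      ContinuousOn un (closure (Qplus n (3/4))) →
      (∀ i : Fin n, HolderOn C α (Qzero n (3/4)) (Hni i)) →
      HolderOn C α (Qzero n (3/4)) Htil →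
      (∀ (i : Fin n), ∀ z₀ ∈ Qzero n (3/4), ∀ z ∈ Qplus n (3/4), z.2 ≤ z₀.2 →
        |ui i z - Hni i z₀ * z.1 (Fin.last n)| ≤ C * pdist z z₀ ^ (1 + α)) →
      (∀ z₀ ∈ Qzero n (3/4), ∀ z ∈ Qplus n (3/4), z.2 ≤ z₀.2 →
        |ut z - Htil z₀ * z.1 (Fin.last n)| ≤ C * pdist z z₀ ^ (1 + α)) →
      (∀ z₀ ∈ Qzero n (3/4), ∀ z ∈ closure (Qplus n (3/4)),
        |un z - un z₀| ≤ C * pdist z z₀ ^ α) →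
      ∀ (i : Fin n) (h t : ℝ), |h| ≤ 1/4 → -(1/16) < t → t ≤ 0 →
        |un (EuclideanSpace.single i.castSucc h, t) - un ((0 : En (n+1)), (0:ℝ))
          - h * Hni i ((0 : En (n+1)), (0:ℝ))|
          ≤ C' * (|h| ^ (1 + α) + |t| ^ ((1 + α)/2)) := by
  refine ⟨19 * C + 1, by positivity, ?_⟩
  intro u un ut ui Hni Htil hu hu0 hderiv _ hHni hHtil hui hut hunH i h t hh ht ht'
  have key {a s : ℝ} (ha : |a| ≤ 1/4) (hs : -(1/4) ≤ s) (hs' : s ≤ 0) :=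
    abs_un_planePt_sub_le hu hu0 (fun z hz => (hderiv z hz).2.1) (fun z hz => (hderiv z hz).1 i)
      (fun z hz => (hderiv z hz).2.2) (hHni i) hHtil (hui i) hut hunH hα hC ha hs hs'
  have hfoot {s : ℝ} (hs : -(1/4) ≤ s) (hs' : s ≤ 0) : planePt i 0 0 s ∈ Qzero n (3/4) :=
    planePt_mem_Qzero_of_le (by norm_num) hs hs'
  have hHt : |Htil (planePt i 0 0 0)| ≤ 17 * C := by
    have h₁ := key (a := 0) (s := -(1/16)) (by norm_num) (by norm_num) (by norm_num)
    have h₂ := hunH _ (hfoot (by norm_num) le_rfl) _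
      (Qzero_subset_closure_Qplus (hfoot (s := -(1/16)) (by norm_num) (by norm_num)))
    have hsqrt : √|(-(1/16) : ℝ)| = 1/4 := by
      rw [show |(-(1/16) : ℝ)| = (1/4) ^ 2 by norm_num, Real.sqrt_sq (by norm_num)]
    have hq : C * (1/4 : ℝ) ^ α ≤ C := mul_le_of_le_one_right hC
      (Real.rpow_le_one (by norm_num) (by norm_num) hα.le)
    rw [pdist_planePt_time, sub_zero, hsqrt] at h₂
    rw [hsqrt] at h₁
    norm_num at h₁ h₂ ⊢
    rw [abs_le] at h₁ h₂ ⊢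
    constructor <;> nlinarith
  have hHn := hHni i _ (hfoot (by linarith) ht') _ (hfoot (by norm_num) le_rfl)
  rw [pdist_planePt_time, sub_zero] at hHn
  have := abs_add_mul_add_mul_le hα.le hα1.le hC (by rw [abs_of_nonpos ht']; linarith)
    (key hh (by linarith) ht') hHn hHt
  simp only [planePt, EuclideanSpace.single_zero, add_zero] at this
  refine le_trans (le_of_eq_of_le ?_ this)
    (mul_le_mul_of_nonneg_right (by linarith) (by positivity))
  ring_nf

/-- from first order expansions of the tangential derivatives `u_i` and of `u_t`
at the flat boundary (with boundary coefficients `H_{ni}`, `H̃`) together with the Hölder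
continuity of `uₙ` up to the boundary, one deduces that `uₙ` restricted to the flat boundary is
`H^{1+α}`:  `|uₙ(h e_i, t) − uₙ(0,0) − h H_{ni}(0,0)| ≤ C′(|h|^{1+α} + |t|^{(1+α)/2})`. -/
theorem stmt10 (n : ℕ) (α C : ℝ) (hn : 1 ≤ n) (hα : 0 < α) (hα1 : α < 1) (hC : 0 ≤ C) :
    ∃ C' : ℝ, 0 < C' ∧
    ∀ (u un ut : En (n+1) × ℝ → ℝ) (ui : Fin n → En (n+1) × ℝ → ℝ)
      (Hni : Fin n → En (n+1) × ℝ → ℝ) (Htil : En (n+1) × ℝ → ℝ),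
      ContinuousOn u (closure (Qplus n (3/4))) →
      (∀ z ∈ Qzero n (3/4), u z = 0) →
      (∀ z ∈ Qplus n (3/4),
        (∀ i : Fin n, HasLineDerivAt ℝ u (ui i z) z (EuclideanSpace.single i.castSucc 1, 0)) ∧
        HasLineDerivAt ℝ u (un z) z (EuclideanSpace.single (Fin.last n) 1, 0) ∧
        HasLineDerivAt ℝ u (ut z) z ((0 : En (n+1)), (1 : ℝ))) →
      ContinuousOn un (closure (Qplus n (3/4))) →
      (∀ i : Fin n, HolderOn C α (Qzero n (3/4)) (Hni i)) →
      HolderOn C α (Qzero n (3/4)) Htil →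
      (∀ (i : Fin n), ∀ z₀ ∈ Qzero n (3/4), ∀ z ∈ Qplus n (3/4), z.2 ≤ z₀.2 →
        |ui i z - Hni i z₀ * z.1 (Fin.last n)| ≤ C * pdist z z₀ ^ (1 + α)) →
      (∀ z₀ ∈ Qzero n (3/4), ∀ z ∈ Qplus n (3/4), z.2 ≤ z₀.2 →
        |ut z - Htil z₀ * z.1 (Fin.last n)| ≤ C * pdist z z₀ ^ (1 + α)) →
      (∀ z₀ ∈ Qzero n (3/4), ∀ z ∈ closure (Qplus n (3/4)),
        |un z - un z₀| ≤ C * pdist z z₀ ^ α) →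
      ∀ (i : Fin n) (h t : ℝ), |h| ≤ 1/4 → -(1/16) < t → t ≤ 0 →
        |un (EuclideanSpace.single i.castSucc h, t) - un ((0 : En (n+1)), (0:ℝ))
          - h * Hni i ((0 : En (n+1)), (0:ℝ))|
          ≤ C' * (|h| ^ (1 + α) + |t| ^ ((1 + α)/2)) :=
  stmt10_general n α C hα hα1 hC
end
end

section
/- Let F satisfy (H1) and (H2). For every N ∈ Sym(n), p ∈ ℝⁿ and (x,t), let a(N,p,x,t) denote the unique real number with F(N + a eₙ⊗eₙ, p, x, t) = 0 (which exists and is unique by (H1)). Then for all N₁, N₂ ∈ Sym(n), p₁, p₂ ∈ ℝⁿ and points (x₁,t₁), (x₂,t₂): |a(N₁,p₁,x₁,t₁) − a(N₂,p₂,x₂,t₂)| ≤ λ^{−1}[ nΛ‖N₁−N₂‖ + K|p₁−p₂| + C̄(‖N₂ + a(N₂,p₂,x₂,t₂) eₙ⊗eₙ‖ + |p₂|)(|x₁−x₂| + |t₁−t₂|^{1/2})^{ᾱ} ]. In particular, if (N,p) ranges over parabolically α-Hölder continuous and bounded functions of a boundary point, then the root a is parabolically min(α,ᾱ)-Hölder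 continuous. -/
open scoped BigOperators
noncomputable section

variable {m n : ℕ}

/-!
Write `E = eₙ ⊗ eₙ` and compare both roots through `g(s) = F(N₂ + s E, p₁, z₁)`. By (H1) with
`M⁻(s E) = λ s` for `s ≥ 0`, `g` increases with slope at least `λ`, so
`λ |a₁ - a₂| ≤ |g(a₁)| + |g(a₂)|`. Since `F(N₁ + a₁ E, p₁, z₁) = 0`, (H1) and
`M⁺(A) ≤ nΛ‖A‖` bound `|g(a₁)|` by `nΛ‖N₁ - N₂‖`; since `F(N₂ + a₂ E, p₂, z₂) = 0`, (H1) in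
the gradient and (H2) in the point bound `|g(a₂)|` by the remaining two terms.
-/

lemma matNorm_sub_comm (A B : Mat m) : matNorm (A - B) = matNorm (B - A) := by
  simp only [matNorm, Matrix.sub_apply, abs_sub_comm]

lemma matNorm_zero : matNorm (0 : Mat m) = 0 := by
  simp [matNorm]

lemma isHermitian_smul_single (i : Fin m) (s : ℝ) :
    (s • Matrix.single i i (1 : ℝ)).IsHermitian := by
  rw [← Matrix.diagonal_single]
  exact (Matrix.isHermitian_diagonal _).smul (IsSelfAdjoint.all s)

lemma posSemidef_smul_single (i : Fin m) {s : ℝ} (hs : 0 ≤ s) :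
    (s • Matrix.single i i (1 : ℝ)).PosSemidef := by
  rw [Matrix.smul_single, smul_eq_mul, mul_one, ← Matrix.diagonal_single]
  exact .diagonal (Pi.single_nonneg.2 hs)

section

attribute [local instance] Matrix.linftyOpNormedRing Matrix.linftyOpNormedAlgebra

lemma linfty_opNorm_le_matNorm (A : Mat m) : ‖A‖ ≤ matNorm A := by
  rw [Matrix.linfty_opNorm_def]
  calc _ ≤ ((∑ i, ∑ j, ‖A i j‖₊ : NNReal) : ℝ) :=
        NNReal.coe_le_coe.2 <| Finset.sup_le fun i _ =>
          Finset.single_le_sum (f := fun i => ∑ j, ‖A i j‖₊) (fun _ _ => zero_le)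
            (Finset.mem_univ i)
    _ = matNorm A := by simp [matNorm]

lemma Matrix.IsHermitian.abs_eigenvalues_le_matNorm {A : Mat m} (hA : A.IsHermitian)
    (i : Fin m) : |hA.eigenvalues i| ≤ matNorm A :=
  have : Nonempty (Fin m) := ⟨i⟩
  (spectrum.norm_le_norm_of_mem (hA.eigenvalues_mem_spectrum_real i)).trans
    (linfty_opNorm_le_matNorm A)

end

lemma pucciPlus_le_mul_matNorm {lam Lam : ℝ} (hlam : 0 ≤ lam) (hll : lam ≤ Lam)
    {A : Mat m} (hA : A.IsHermitian) : pucciPlus lam Lam A ≤ m * Lam * matNorm A := by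
  rw [pucciPlus, dif_pos hA]
  calc ∑ i, max (lam * hA.eigenvalues i) (Lam * hA.eigenvalues i)
      ≤ ∑ _i : Fin m, Lam * matNorm A := by
        gcongr with i
        have hLam : 0 ≤ Lam := hlam.trans hll
        calc max (lam * hA.eigenvalues i) (Lam * hA.eigenvalues i)
            ≤ Lam * |hA.eigenvalues i| := max_le
              ((mul_le_mul_of_nonneg_left (le_abs_self _) hlam).trans
                (mul_le_mul_of_nonneg_right hll (abs_nonneg _)))
              (mul_le_mul_of_nonneg_left (le_abs_self _) hLam)
          _ ≤ Lam * matNorm A :=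
              mul_le_mul_of_nonneg_left (hA.abs_eigenvalues_le_matNorm i) hLam
    _ = m * Lam * matNorm A := by simp [mul_assoc]

lemma pucciMinus_eq_mul_trace {lam Lam : ℝ} (hll : lam ≤ Lam) {A : Mat m}
    (hA : A.PosSemidef) : pucciMinus lam Lam A = lam * A.trace := by
  rw [pucciMinus, dif_pos hA.isHermitian, hA.isHermitian.trace_eq_sum_eigenvalues,
    Finset.mul_sum]
  refine Finset.sum_congr rfl fun i _ => ?_
  simpa using mul_le_mul_of_nonneg_right hll (hA.eigenvalues_nonneg i)

namespace SatH1

variable {lam Lam K : ℝ} {F : Mat m → En m → En m × ℝ → ℝ}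

lemma abs_sub_le (hF : SatH1 lam Lam K F) (hlam : 0 ≤ lam) (hll : lam ≤ Lam)
    {M N : Mat m} (hM : M.IsHermitian) (hN : N.IsHermitian) (p q : En m) (z : En m × ℝ) :
    |F M p z - F N q z| ≤ m * Lam * matNorm (M - N) + K * ‖p - q‖ := by
  rw [abs_sub_le_iff]
  constructor
  · exact (hF M N hM hN p q z).2.trans
      (add_le_add_left (pucciPlus_le_mul_matNorm hlam hll (hM.sub hN)) _)
  · rw [matNorm_sub_comm, norm_sub_rev]
    exact (hF N M hN hM q p z).2.trans
      (add_le_add_left (pucciPlus_le_mul_matNorm hlam hll (hN.sub hM)) _)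

lemma mul_sub_le_sub_smul_single (hF : SatH1 lam Lam K F) (hll : lam ≤ Lam)
    {N : Mat m} (hN : N.IsHermitian) (i : Fin m) (p : En m) (z : En m × ℝ) {s t : ℝ}
    (hst : s ≤ t) :
    lam * (t - s) ≤
      F (N + t • Matrix.single i i 1) p z - F (N + s • Matrix.single i i 1) p z := by
  have h := (hF _ _ (hN.add (isHermitian_smul_single i t))
    (hN.add (isHermitian_smul_single i s)) p p z).1
  rwa [add_sub_add_left_eq_sub, ← sub_smul,
    pucciMinus_eq_mul_trace hll (posSemidef_smul_single i (sub_nonneg.2 hst)), sub_self,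
    norm_zero, mul_zero, sub_zero, Matrix.trace_smul, Matrix.trace_single_eq_same, smul_eq_mul,
    mul_one] at h

lemma mul_abs_sub_le_abs_sub_smul_single (hF : SatH1 lam Lam K F) (hll : lam ≤ Lam)
    {N : Mat m} (hN : N.IsHermitian) (i : Fin m) (p : En m) (z : En m × ℝ) (s t : ℝ) :
    lam * |t - s| ≤
      |F (N + t • Matrix.single i i 1) p z - F (N + s • Matrix.single i i 1) p z| := by
  rcases le_total s t with hst | hts
  · rw [abs_of_nonneg (sub_nonneg.2 hst)]
    exact (hF.mul_sub_le_sub_smul_single hll hN i p z hst).trans (le_abs_self _)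
  · rw [abs_sub_comm, abs_of_nonneg (sub_nonneg.2 hts), abs_sub_comm]
    exact (hF.mul_sub_le_sub_smul_single hll hN i p z hts).trans (le_abs_self _)

end SatH1

theorem stmt13_general (n : ℕ) (lam Lam K abar Cbar : ℝ)
    (hlam : 0 < lam) (hll : lam ≤ Lam)
    (F : Mat (n+1) → En (n+1) → En (n+1) × ℝ → ℝ)
    (hH1 : SatH1 lam Lam K F) (hH2 : SatH2 abar Cbar F)
    (a : Mat (n+1) → En (n+1) → En (n+1) × ℝ → ℝ)
    (ha : ∀ (N : Mat (n+1)) (p : En (n+1)) (z : En (n+1) × ℝ), N.IsHermitian →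
      F (N + a N p z • Matrix.single (Fin.last n) (Fin.last n) (1:ℝ)) p z = 0) :
    ∀ (N₁ N₂ : Mat (n+1)) (p₁ p₂ : En (n+1)) (z₁ z₂ : En (n+1) × ℝ),
      N₁.IsHermitian → N₂.IsHermitian →
      |a N₁ p₁ z₁ - a N₂ p₂ z₂| ≤
        lam⁻¹ * (((n+1 : ℕ) : ℝ) * Lam * matNorm (N₁ - N₂) + K * ‖p₁ - p₂‖ +
          Cbar * (matNorm (N₂ + a N₂ p₂ z₂ •
              Matrix.single (Fin.last n) (Fin.last n) (1:ℝ)) + ‖p₂‖)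
            * pdist z₁ z₂ ^ abar) := by
  intro N₁ N₂ p₁ p₂ z₁ z₂ hN₁ hN₂
  set E := Matrix.single (Fin.last n) (Fin.last n) (1:ℝ)
  set a₁ := a N₁ p₁ z₁
  set a₂ := a N₂ p₂ z₂
  have hE (s : ℝ) : (s • E).IsHermitian := isHermitian_smul_single (Fin.last n) s
  have h₁ : |F (N₂ + a₁ • E) p₁ z₁| ≤ ((n+1 : ℕ) : ℝ) * Lam * matNorm (N₁ - N₂) := by
    have h := hH1.abs_sub_le hlam.le hll (hN₁.add (hE a₁)) (hN₂.add (hE a₁)) p₁ p₁ z₁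
    rwa [ha N₁ p₁ z₁ hN₁, zero_sub, abs_neg, add_sub_add_right_eq_sub, sub_self, norm_zero,
      mul_zero, add_zero] at h
  have h₂ : |F (N₂ + a₂ • E) p₁ z₁| ≤
      K * ‖p₁ - p₂‖ + Cbar * (matNorm (N₂ + a₂ • E) + ‖p₂‖) * pdist z₁ z₂ ^ abar := by
    have hp := hH1.abs_sub_le hlam.le hll (hN₂.add (hE a₂)) (hN₂.add (hE a₂)) p₁ p₂ z₁
    rw [sub_self, matNorm_zero, mul_zero, zero_add] at hp
    calc |F (N₂ + a₂ • E) p₁ z₁| = |F (N₂ + a₂ • E) p₁ z₁ - F (N₂ + a₂ • E) p₂ z₂| := by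
          rw [ha N₂ p₂ z₂ hN₂, sub_zero]
      _ ≤ _ := abs_sub_le _ (F (N₂ + a₂ • E) p₂ z₁) _
      _ ≤ _ := add_le_add hp (hH2 _ _ _ _)
  have key : lam * |a₁ - a₂| ≤ _ :=
    (hH1.mul_abs_sub_le_abs_sub_smul_single hll hN₂ (Fin.last n) p₁ z₁ a₂ a₁).trans
      ((abs_sub _ _).trans (add_le_add h₁ h₂))
  rw [le_inv_mul_iff₀ hlam]
  linarith

/-- Hölder-type continuity of the root `a(N,p,x,t)` of
`F(N + a eₙ⊗eₙ, p, x, t) = 0` in all of its arguments, for `F` satisfying (H1) and (H2). -/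
theorem stmt13 (n : ℕ) (lam Lam K abar Cbar : ℝ)
    (hlam : 0 < lam) (hll : lam ≤ Lam) (hK : 0 ≤ K) (habar : 0 < abar) (hCbar : 0 < Cbar)
    (F : Mat (n+1) → En (n+1) → En (n+1) × ℝ → ℝ)
    (hH1 : SatH1 lam Lam K F) (hH2 : SatH2 abar Cbar F)
    (a : Mat (n+1) → En (n+1) → En (n+1) × ℝ → ℝ)
    (ha : ∀ (N : Mat (n+1)) (p : En (n+1)) (z : En (n+1) × ℝ), N.IsHermitian →
      F (N + a N p z • Matrix.single (Fin.last n) (Fin.last n) (1:ℝ)) p z = 0) :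
    ∀ (N₁ N₂ : Mat (n+1)) (p₁ p₂ : En (n+1)) (z₁ z₂ : En (n+1) × ℝ),
      N₁.IsHermitian → N₂.IsHermitian →
      |a N₁ p₁ z₁ - a N₂ p₂ z₂| ≤
        lam⁻¹ * (((n+1 : ℕ) : ℝ) * Lam * matNorm (N₁ - N₂) + K * ‖p₁ - p₂‖ +
          Cbar * (matNorm (N₂ + a N₂ p₂ z₂ •
              Matrix.single (Fin.last n) (Fin.last n) (1:ℝ)) + ‖p₂‖)
            * pdist z₁ z₂ ^ abar) :=
  stmt13_general n lam Lam K abar Cbar hlam hll F hH1 hH2 a ha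

end
end

section
/- Let n ≥ 1, γ, β ∈ (0,1), C > 0 and let u : Q₁⁺ → ℝ. Suppose there exist sequences A_k ∈ ℝ and H_k ∈ Sym(n), k ≥ 0, such that for every k: |A_k − A_{k+1}| ≤ C γ^{k(1+β)}, |H_k − H_{k+1}| ≤ C γ^{kβ}, and sup_{(x,t) ∈ Q⁺_{γ^k}} |u(x,t) − A_k xₙ − ⟨H_k x, x⟩| ≤ γ^{k(2+β)}. Then the limits A_∞ = lim A_k and H_∞ = lim H_k exist, and there is a constant C′ depending only on C, γ, β such that for all (x,t) ∈ Q₁⁺: |u(x,t) − A_∞ xₙ − ⟨H_∞ x, x⟩| ≤ C′ (|x| + |t|^{1/2})^{2+β}. -/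
open scoped BigOperators
noncomputable section

variable {m n : ℕ}

/-!
The increments of `A_k` and `H_k` decay geometrically, so both sequences converge, with tails
`|A_k - A_∞| ≲ γ^{k(1+β)}` and `|H_k - H_∞| ≲ γ^{kβ}`. On `Q⁺_{γ^k}`, where `|x| < γ^k`, trading
the jet `(A_k, H_k)` for its limit therefore costs `O(γ^{k(2+β)})`; a point of `Q⁺_1` at parabolic
distance `d` from the origin lies in `Q⁺_{γ^k}` for some `k` with `γ^{k+1} ≤ d`.
-/

open Filter Topology

lemma qform_sub (M N : Mat m) (x : En m) :
    qform (M - N) x = qform M x - qform N x := by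
  simp only [qform, Matrix.sub_apply, sub_mul, Finset.sum_sub_distrib]

lemma matNorm_nonneg (M : Mat m) : 0 ≤ matNorm M :=
  Finset.sum_nonneg fun _ _ => Finset.sum_nonneg fun _ _ => abs_nonneg _

lemma abs_apply_le_matNorm (M : Mat m) (i j : Fin m) : |M i j| ≤ matNorm M :=
  calc |M i j| ≤ ∑ j', |M i j'| :=
        Finset.single_le_sum (f := fun j' => |M i j'|) (fun _ _ => abs_nonneg _)
          (Finset.mem_univ j)
    _ ≤ matNorm M :=
        Finset.single_le_sum (f := fun i' => ∑ j', |M i' j'|)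
          (fun _ _ => Finset.sum_nonneg fun _ _ => abs_nonneg _) (Finset.mem_univ i)

lemma matNorm_le_of_forall_abs_apply_le {M : Mat m} {c : ℝ} (h : ∀ i j, |M i j| ≤ c) :
    matNorm M ≤ m ^ 2 * c :=
  calc matNorm M ≤ ∑ _i : Fin m, ∑ _j : Fin m, c :=
        Finset.sum_le_sum fun i _ => Finset.sum_le_sum fun j _ => h i j
    _ = m ^ 2 * c := by simp [sq, mul_assoc]

lemma abs_qform_le (M : Mat m) (x : En m) : |qform M x| ≤ matNorm M * ‖x‖ ^ 2 := by
  have hx : ∀ i, |x i| ≤ ‖x‖ := fun i => by simpa using PiLp.norm_apply_le x i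
  calc |qform M x| ≤ ∑ i, ∑ j, |M i j * x i * x j| :=
        (Finset.abs_sum_le_sum_abs _ _).trans
          (Finset.sum_le_sum fun i _ => Finset.abs_sum_le_sum_abs _ _)
    _ ≤ ∑ i, ∑ j, |M i j| * ‖x‖ ^ 2 := by
        gcongr with i _ j _
        rw [abs_mul, abs_mul, mul_assoc, sq]
        gcongr
        exacts [hx i, hx j]
    _ = matNorm M * ‖x‖ ^ 2 := by simp only [matNorm, Finset.sum_mul]

lemma abs_sub_linear_sub_qform_le {v a a' s β D₁ D₂ : ℝ} {M M' : Mat m} {x : En m} (i : Fin m)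
    (hs : 0 < s) (hx : ‖x‖ ≤ s) (hv : |v - a * x i - qform M x| ≤ s ^ (2 + β))
    (ha : |a - a'| ≤ D₁ * s ^ (1 + β)) (hM : matNorm (M - M') ≤ D₂ * s ^ β) :
    |v - a' * x i - qform M' x| ≤ (1 + D₁ + D₂) * s ^ (2 + β) := by
  have hxi : |x i| ≤ s := (by simpa using PiLp.norm_apply_le x i : |x i| ≤ ‖x‖).trans hx
  have hlin : |(a - a') * x i| ≤ D₁ * s ^ (2 + β) :=
    calc |(a - a') * x i| ≤ D₁ * s ^ (1 + β) * s := by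
          rw [abs_mul]; exact mul_le_mul ha hxi (abs_nonneg _) ((abs_nonneg _).trans ha)
      _ = D₁ * s ^ (2 + β) := by
          rw [mul_assoc, ← Real.rpow_add_one hs.ne']; ring_nf
  have hquad : |qform M x - qform M' x| ≤ D₂ * s ^ (2 + β) :=
    calc |qform M x - qform M' x| ≤ D₂ * s ^ β * s ^ 2 := by
          rw [← qform_sub]
          refine (abs_qform_le _ _).trans (mul_le_mul hM ?_ (by positivity)
            ((matNorm_nonneg _).trans hM))
          gcongr
      _ = D₂ * s ^ (2 + β) := by
          rw [mul_assoc, ← Real.rpow_natCast, ← Real.rpow_add hs]; ring_nf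
  calc |v - a' * x i - qform M' x|
      = |(v - a * x i - qform M x) + (a - a') * x i + (qform M x - qform M' x)| := by
        congr 1; ring
    _ ≤ |v - a * x i - qform M x| + |(a - a') * x i| + |qform M x - qform M' x| :=
        abs_add_three _ _ _
    _ ≤ (1 + D₁ + D₂) * s ^ (2 + β) := by linarith

lemma exists_tendsto_dist_le_geometric {α : Type*} [PseudoMetricSpace α] [CompleteSpace α]
    {f : ℕ → α} {C r : ℝ} (hr : r < 1) (hf : ∀ k, dist (f k) (f (k + 1)) ≤ C * r ^ k) :
    ∃ a, Tendsto f atTop (𝓝 a) ∧ ∀ k, dist (f k) a ≤ C * r ^ k / (1 - r) :=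
  have ⟨a, ha⟩ := cauchySeq_tendsto_of_complete (cauchySeq_of_le_geometric r C hr hf)
  ⟨a, ha, dist_le_of_le_geometric_of_tendsto r C hr hf ha⟩

lemma exists_tendsto_matNorm_le_geometric {H : ℕ → Mat m} {C r : ℝ} (hr : r < 1)
    (hH : ∀ k, matNorm (H k - H (k + 1)) ≤ C * r ^ k) :
    ∃ H₀, Tendsto H atTop (𝓝 H₀) ∧ ∀ k, matNorm (H k - H₀) ≤ m ^ 2 * (C * r ^ k / (1 - r)) := by
  have hentry (i j : Fin m) (k : ℕ) : dist (H k i j) (H (k + 1) i j) ≤ C * r ^ k :=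
    (abs_apply_le_matNorm (H k - H (k + 1)) i j).trans (hH k)
  choose H₀ hlim htail using fun i j => exists_tendsto_dist_le_geometric hr (hentry i j)
  refine ⟨Matrix.of H₀, tendsto_pi_nhds.2 fun i => tendsto_pi_nhds.2 (hlim i), fun k => ?_⟩
  exact matNorm_le_of_forall_abs_apply_le fun i j => htail i j k

lemma exists_pow_succ_le_and_lt {γ d : ℝ} (hγ0 : 0 < γ) (hγ1 : γ < 1) (hd : 0 < d) :
    ∃ k : ℕ, γ ^ (k + 1) ≤ d ∧ (k = 0 ∨ d < γ ^ k) := by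
  have hex : ∃ k : ℕ, γ ^ (k + 1) ≤ d :=
    let ⟨k, hk⟩ := exists_pow_lt_of_lt_one hd hγ1
    ⟨k, (pow_le_pow_of_le_one hγ0.le hγ1.le k.le_succ).trans hk.le⟩
  refine ⟨Nat.find hex, Nat.find_spec hex, ?_⟩
  rcases h : Nat.find hex with _ | j
  · exact .inl rfl
  · exact .inr (not_le.1 (Nat.find_min hex (by omega : j < Nat.find hex)))

lemma mem_Qplus_of_add_sqrt_lt {z : En (n + 1) × ℝ} {r : ℝ} (hpos : 0 < z.1 (Fin.last n))
    (ht : z.2 ≤ 0) (hr : ‖z.1‖ + √|z.2| < r) : z ∈ Qplus n r := by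
  have hsqrt : √|z.2| < r := by linarith [norm_nonneg z.1]
  have ht' : |z.2| < r ^ 2 := (Real.sqrt_lt' (by linarith [Real.sqrt_nonneg |z.2|])).1 hsqrt
  refine ⟨⟨by linarith [Real.sqrt_nonneg |z.2|], hpos⟩, ?_, ht⟩
  linarith [abs_of_nonpos ht]

lemma le_of_forall_mem_Qplus_pow {f : En (n + 1) × ℝ → ℝ} {γ α K : ℝ} (hγ0 : 0 < γ)
    (hγ1 : γ < 1) (hα : 0 ≤ α) (hK : 0 ≤ K)
    (hf : ∀ k : ℕ, ∀ z ∈ Qplus n (γ ^ k), f z ≤ K * (γ ^ k) ^ α) :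
    ∀ z ∈ Qplus n 1, f z ≤ K / γ ^ α * (‖z.1‖ + √|z.2|) ^ α := by
  intro z hz
  have hd : 0 < ‖z.1‖ + √|z.2| := by
    have : z.1 ≠ 0 := fun h => by simpa [h] using hz.1.2
    positivity
  obtain ⟨k, hkd, hk⟩ := exists_pow_succ_le_and_lt hγ0 hγ1 hd
  have hzk : z ∈ Qplus n (γ ^ k) := by
    rcases hk with rfl | hk
    · simpa using hz
    · exact mem_Qplus_of_add_sqrt_lt hz.1.2 hz.2.2 hk
  calc f z ≤ K * (γ ^ k) ^ α := hf k z hzk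
    _ ≤ K * ((‖z.1‖ + √|z.2|) / γ) ^ α := by
        gcongr
        rw [le_div_iff₀ hγ0, ← pow_succ]
        exact hkd
    _ = K / γ ^ α * (‖z.1‖ + √|z.2|) ^ α := by
        rw [Real.div_rpow hd.le hγ0.le]; ring

/-- the real-analysis iteration lemma.  Geometric convergence of the
approximating jets `(A_k, H_k)` on the dyadic half cylinders `Q⁺_{γ^k}` yields limits
`(A_∞, H_∞)` and a pointwise `H^{2+β}` decay estimate on `Q₁⁺`. -/
theorem stmt14 (n : ℕ) (γ β C : ℝ)
    (hγ : γ ∈ Set.Ioo (0:ℝ) 1) (hβ : β ∈ Set.Ioo (0:ℝ) 1) (hC : 0 < C) :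
    ∃ C' : ℝ, 0 < C' ∧
    ∀ (u : En (n+1) × ℝ → ℝ) (A : ℕ → ℝ) (H : ℕ → Mat (n+1)),
      (∀ k, (H k).IsHermitian) →
      (∀ k : ℕ, |A k - A (k+1)| ≤ C * γ ^ ((k : ℝ) * (1 + β))) →
      (∀ k : ℕ, matNorm (H k - H (k+1)) ≤ C * γ ^ ((k : ℝ) * β)) →
      (∀ k : ℕ, ∀ z ∈ Qplus n (γ ^ k),
        |u z - A k * z.1 (Fin.last n) - qform (H k) z.1| ≤ γ ^ ((k : ℝ) * (2 + β))) →
      ∃ (Ainf : ℝ) (Hinf : Mat (n+1)),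
        Filter.Tendsto A Filter.atTop (nhds Ainf) ∧
        Filter.Tendsto H Filter.atTop (nhds Hinf) ∧
        ∀ z ∈ Qplus n 1,
          |u z - Ainf * z.1 (Fin.last n) - qform Hinf z.1|
            ≤ C' * (‖z.1‖ + Real.sqrt |z.2|) ^ (2 + β) := by
  obtain ⟨hγ0, hγ1⟩ := hγ
  have hpow (c : ℝ) (k : ℕ) : γ ^ ((k : ℝ) * c) = (γ ^ c) ^ k := by
    rw [mul_comm, Real.rpow_mul_natCast hγ0.le]
  have h1β : 0 < 1 + β := by linarith [hβ.1]
  have hratio (c : ℝ) (hc : 0 < c) : 0 < 1 - γ ^ c := sub_pos.2 (Real.rpow_lt_one hγ0.le hγ1 hc)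
  have hD₁ : 0 ≤ C / (1 - γ ^ (1 + β)) := div_nonneg hC.le (hratio _ h1β).le
  have hD₂ : 0 ≤ ((n + 1 : ℕ) : ℝ) ^ 2 * (C / (1 - γ ^ β)) := by
    have := hratio β hβ.1; positivity
  refine ⟨(1 + C / (1 - γ ^ (1 + β)) + ((n + 1 : ℕ) : ℝ) ^ 2 * (C / (1 - γ ^ β))) / γ ^ (2 + β),
    by positivity, fun u A H _ hA hH hu => ?_⟩
  obtain ⟨A₀, hAlim, hAtail⟩ := exists_tendsto_dist_le_geometric (f := A)
    (Real.rpow_lt_one hγ0.le hγ1 h1β) fun k => by rw [Real.dist_eq, ← hpow]; exact hA k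
  obtain ⟨H₀, hHlim, hHtail⟩ := exists_tendsto_matNorm_le_geometric
    (Real.rpow_lt_one hγ0.le hγ1 hβ.1) fun k => by rw [← hpow]; exact hH k
  refine ⟨A₀, H₀, hAlim, hHlim, le_of_forall_mem_Qplus_pow hγ0 hγ1 (by linarith [hβ.1])
    (by positivity) fun k z hz => abs_sub_linear_sub_qform_le (a := A k) (M := H k) _
      (pow_pos hγ0 k) hz.1.1.le ?_ ?_ ?_⟩
  · rw [← Real.rpow_natCast_mul hγ0.le]; exact hu k z hz
  · rw [← Real.rpow_pow_comm hγ0.le, ← Real.dist_eq]; exact (hAtail k).trans_eq (by ring)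
  · rw [← Real.rpow_pow_comm hγ0.le]; exact (hHtail k).trans_eq (by ring)

end
end
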